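/- arXiv:math/0001018 — 2 statements merged into one kernel-verified Lean document; each statement's English description precedes it below -/
import Mathlib

section
/- For k ≥ 1 let J_k = ((k+1)^{−3(k+1)}, k^{−3k}] ⊂ (0,1], and let η be the measure on ℝ with density g(x) = Σ_{k=1}^∞ |x|^{−3+1/k} · 1_{{|x| ∈ J_k}}(x) with respect to Lebesgue measure. Then the index of η, defined as β = inf{ α > 0 : ∫_{{|x| ≤ 1}} |x|^α dη(x) < ∞ }, equals 2. -/
open MeasureTheory ENNReal

/-- The density `g(x) = Σ_{k≥1} |x|^{−3+1/k} · 1_{|x| ∈ J_k}(x)`, where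
`J_k = ((k+1)^{−3(k+1)}, k^{−3k}]`.  (The series over `k ≥ 1` is indexed by `k : ℕ`
via `k ↦ k+1`.) -/
noncomputable def levyDensity (x : ℝ) : ℝ :=
  ∑' k : ℕ,
    if |x| ∈ Set.Ioc (((k : ℝ) + 2) ^ (-(3 : ℝ) * ((k : ℝ) + 2)))
        (((k : ℝ) + 1) ^ (-(3 : ℝ) * ((k : ℝ) + 1)))
    then |x| ^ ((-3 : ℝ) + 1 / ((k : ℝ) + 1)) else 0

/-- The measure `η` on `ℝ` with density `g` with respect to Lebesgue measure. -/
noncomputable def levyEta : Measure ℝ :=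
  volume.withDensity fun x => ENNReal.ofReal (levyDensity x)

/-!
On `J_k` the integrand `|x| ^ α * g x` equals `|x| ^ (α - 3 + 1/k)`, so by symmetry
`∫_{|x| ≤ 1} |x| ^ α dη = 2 ∑ₖ ∫_{J_k} t ^ (α - 3 + 1/k) dt`. For `α > 2` the `k`-th term is at
most `b ^ (α - 2) / (α - 2)` with `b = k ^ (-3k) ≤ 8 ^ (-(k-1))`, which is summable. For `α < 2`,
`J_k` covers at least half of `(0, b]`, so the `k`-th term is at least
`b ^ (α - 2 + 1/k) / 2 = k ^ (3k(2 - α) - 3) / 2 ≥ 1/2` for large `k`, and the series diverges.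
-/

open Set Filter
open scoped Function

theorem ENNReal.ofReal_tsum_indicator_of_pairwise_disjoint {α ι : Type*} {s : ι → Set α}
    (hs : Pairwise (Disjoint on s)) {f : ι → α → ℝ} (hf : ∀ i, ∀ a ∈ s i, 0 ≤ f i a) (a : α) :
    ENNReal.ofReal (∑' i, (s i).indicator (f i) a)
      = ∑' i, (s i).indicator (fun a => ENNReal.ofReal (f i a)) a := by
  have hsupp : (Function.support fun i => (s i).indicator (f i) a) ⊆ {i | a ∈ s i} :=
    fun i hi => by_contra fun h : a ∉ s i => hi (indicator_of_notMem h _)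
  have hsingle : {i | a ∈ s i}.Subsingleton :=
    fun i hi j hj => by_contra fun hij => disjoint_left.1 (hs hij) hi hj
  rw [ENNReal.ofReal_tsum_of_nonneg (fun i => indicator_nonneg (hf i) a)
    (summable_of_hasFiniteSupport (hsingle.finite.subset hsupp))]
  congr 1 with i
  by_cases h : a ∈ s i <;> simp [h]

theorem ENNReal.tsum_eq_top_of_eventually_le {f : ℕ → ℝ≥0∞} {c : ℝ≥0∞} (hc : c ≠ 0)
    (h : ∀ᶠ n in atTop, c ≤ f n) : ∑' n, f n = ∞ := by
  by_contra hfin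
  have hsmall : ∀ᶠ n in atTop, f n < c :=
    (ENNReal.tendsto_atTop_zero_of_tsum_ne_top hfin).eventually (gt_mem_nhds hc.bot_lt)
  obtain ⟨n, hle, hlt⟩ := (h.and hsmall).exists
  exact hle.not_gt hlt

theorem lintegral_comp_abs {f : ℝ → ℝ≥0∞} (hf : Measurable f) :
    ∫⁻ x, f |x| = 2 * ∫⁻ x in Ioi 0, f x := by
  have hsplit : (fun x => f |x|) =ᵐ[volume]
      fun x => (Ioi 0).indicator f x + (Ioi 0).indicator f (-x) := by
    filter_upwards [Measure.ae_ne volume 0] with x hx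
    rcases hx.lt_or_gt with hneg | hpos
    · simp [abs_of_neg hneg, indicator_of_notMem (notMem_Ioi.2 hneg.le), hneg]
    · simp [abs_of_pos hpos, hpos, indicator_of_notMem (notMem_Ioi.2 (neg_nonpos.2 hpos.le))]
  rw [lintegral_congr_ae hsplit, lintegral_add_left (hf.indicator measurableSet_Ioi),
    lintegral_neg_eq_self (fun x => (Ioi 0).indicator f x), ← two_mul,
    lintegral_indicator measurableSet_Ioi]

theorem csInf_eq_of_Ioi_subset_of_subset_Ici {α : Type*} [ConditionallyCompleteLinearOrder α]
    [NoMaxOrder α] [DenselyOrdered α] {s : Set α} {a : α} (hIoi : Ioi a ⊆ s) (hIci : s ⊆ Ici a) :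
    sInf s = a :=
  le_antisymm ((csInf_le_csInf ⟨a, hIci⟩ nonempty_Ioi hIoi).trans csInf_Ioi.le)
    (le_csInf (nonempty_Ioi.mono hIoi) hIci)

theorem setLIntegral_Ioc_zero_rpow {b q : ℝ} (hb : 0 < b) (hq : -1 < q) :
    ∫⁻ t in Ioc 0 b, ENNReal.ofReal (t ^ q) = ENNReal.ofReal (b ^ (q + 1) / (q + 1)) := by
  have hint : IntegrableOn (fun t : ℝ => t ^ q) (Ioc 0 b) := by
    rw [← intervalIntegrable_iff_integrableOn_Ioc_of_le hb.le]
    exact intervalIntegral.intervalIntegrable_rpow' hq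
  have hnonneg : 0 ≤ᵐ[volume.restrict (Ioc 0 b)] fun t : ℝ => t ^ q := by
    filter_upwards [ae_restrict_mem measurableSet_Ioc] with t ht
    exact Real.rpow_nonneg ht.1.le q
  rw [← ofReal_integral_eq_lintegral_ofReal hint hnonneg, ← intervalIntegral.integral_of_le hb.le,
    integral_rpow (Or.inl hq), Real.zero_rpow (by linarith), sub_zero]

theorem ofReal_rpow_mul_sub_le_setLIntegral_Ioc {a b q : ℝ} (ha : 0 < a) (hab : a ≤ b)
    (hq : q ≤ 0) : ENNReal.ofReal (b ^ q * (b - a)) ≤ ∫⁻ t in Ioc a b, ENNReal.ofReal (t ^ q) := by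
  calc ENNReal.ofReal (b ^ q * (b - a)) = ∫⁻ _ in Ioc a b, ENNReal.ofReal (b ^ q) := by
        rw [setLIntegral_const, Real.volume_Ioc,
          ENNReal.ofReal_mul (Real.rpow_nonneg (ha.le.trans hab) q)]
    _ ≤ ∫⁻ t in Ioc a b, ENNReal.ofReal (t ^ q) :=
        setLIntegral_mono (measurable_id.pow_const q).ennreal_ofReal fun t ht =>
          ENNReal.ofReal_le_ofReal (Real.rpow_le_rpow_of_nonpos (ha.trans ht.1) ht.2 hq)

namespace LevyEta

noncomputable def endpoint (k : ℕ) : ℝ := ((k : ℝ) + 1) ^ (-(3 : ℝ) * ((k : ℝ) + 1))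

noncomputable def exponent (k : ℕ) : ℝ := -3 + 1 / ((k : ℝ) + 1)

/-- `shell k` is the paper's `J_{k+1}`, on which the density is `t ^ exponent k`. -/
def shell (k : ℕ) : Set ℝ := Ioc (endpoint (k + 1)) (endpoint k)

noncomputable def shellIntegral (k : ℕ) (α : ℝ) : ℝ≥0∞ :=
  ∫⁻ t in shell k, ENNReal.ofReal (t ^ (α + exponent k))

theorem endpoint_pos (k : ℕ) : 0 < endpoint k :=
  Real.rpow_pos_of_pos (by positivity) _

theorem endpoint_zero : endpoint 0 = 1 := by
  simp [endpoint]

theorem endpoint_succ (k : ℕ) :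
    endpoint (k + 1) = ((k : ℝ) + 2) ^ (-(3 : ℝ) * ((k : ℝ) + 2)) := by
  simp only [endpoint, Nat.cast_succ, add_assoc, one_add_one_eq_two]

theorem endpoint_succ_le (k : ℕ) : endpoint (k + 1) ≤ endpoint k / 8 := by
  have hk : (0 : ℝ) < (k : ℝ) + 1 := by positivity
  have hbase : ((k : ℝ) + 2) ^ (-(3 : ℝ) * ((k : ℝ) + 1)) ≤ endpoint k :=
    Real.rpow_le_rpow_of_nonpos hk (by linarith) (by nlinarith)
  have hcube : ((k : ℝ) + 2) ^ (-(3 : ℝ)) ≤ 1 / 8 := by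
    rw [Real.rpow_neg (by positivity), Real.rpow_ofNat, inv_eq_one_div]
    have htwo : (2 : ℝ) ≤ (k : ℝ) + 2 := by linarith
    gcongr
    calc (8 : ℝ) = 2 ^ 3 := by norm_num
      _ ≤ ((k : ℝ) + 2) ^ 3 := by gcongr
  calc endpoint (k + 1)
      = ((k : ℝ) + 2) ^ (-(3 : ℝ) * ((k : ℝ) + 1)) * ((k : ℝ) + 2) ^ (-(3 : ℝ)) := by
        rw [endpoint_succ, ← Real.rpow_add (by positivity)]
        ring_nf
    _ ≤ endpoint k * (1 / 8) := mul_le_mul hbase hcube (by positivity) (endpoint_pos k).le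
    _ = endpoint k / 8 := by ring

theorem endpoint_antitone : Antitone endpoint :=
  antitone_nat_of_succ_le fun k =>
    (endpoint_succ_le k).trans (div_le_self (endpoint_pos k).le (by norm_num))

theorem endpoint_le_one (k : ℕ) : endpoint k ≤ 1 :=
  endpoint_zero ▸ endpoint_antitone k.zero_le

theorem endpoint_le_inv_eight_pow (k : ℕ) : endpoint k ≤ 8⁻¹ ^ k := by
  induction k with
  | zero => simp [endpoint_zero]
  | succ k ih =>
    calc endpoint (k + 1) ≤ endpoint k / 8 := endpoint_succ_le k
      _ ≤ 8⁻¹ ^ k / 8 := by gcongr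
      _ = 8⁻¹ ^ (k + 1) := by rw [pow_succ, div_eq_mul_inv]

theorem pairwise_disjoint_shell : Pairwise (Disjoint on shell) := by
  show Pairwise (Disjoint on fun k => Ioc (endpoint (k + 1)) (endpoint k))
  simpa only [Order.succ_eq_add_one] using endpoint_antitone.pairwise_disjoint_on_Ioc_succ

theorem shell_subset_Ioc (k : ℕ) : shell k ⊆ Ioc 0 1 :=
  Ioc_subset_Ioc (endpoint_pos (k + 1)).le (endpoint_le_one k)

theorem measurableSet_shell (k : ℕ) : MeasurableSet (shell k) := measurableSet_Ioc

theorem measurable_indicator_shell (k : ℕ) (e : ℝ) :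
    Measurable ((shell k).indicator fun t => ENNReal.ofReal (t ^ e)) :=
  (measurable_id.pow_const e).ennreal_ofReal.indicator (measurableSet_shell k)

theorem ofReal_levyDensity (x : ℝ) :
    ENNReal.ofReal (levyDensity x)
      = ∑' k, (shell k).indicator (fun t => ENNReal.ofReal (t ^ exponent k)) |x| := by
  have hseries : levyDensity x = ∑' k, (shell k).indicator (fun t => t ^ exponent k) |x| := by
    unfold levyDensity
    congr 1 with k
    rw [shell, endpoint_succ, indicator_apply]
    rfl
  rw [hseries]
  exact ENNReal.ofReal_tsum_indicator_of_pairwise_disjoint pairwise_disjoint_shell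
    (fun k t ht => Real.rpow_nonneg ((endpoint_pos (k + 1)).trans ht.1).le _) |x|

theorem setLIntegral_indicator_shell_abs_mul (k : ℕ) (α : ℝ) :
    ∫⁻ x in {x : ℝ | |x| ≤ 1},
        (shell k).indicator (fun t => ENNReal.ofReal (t ^ exponent k)) |x|
          * ENNReal.ofReal (|x| ^ α)
      = 2 * shellIntegral k α := by
  have hmul : ∀ t, (shell k).indicator (fun t => ENNReal.ofReal (t ^ exponent k)) t
      * ENNReal.ofReal (t ^ α)
        = (shell k).indicator (fun t => ENNReal.ofReal (t ^ (α + exponent k))) t := by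
    intro t
    by_cases ht : t ∈ shell k
    · have hpos : 0 < t := (shell_subset_Ioc k ht).1
      rw [indicator_of_mem ht, indicator_of_mem ht,
        ← ENNReal.ofReal_mul (Real.rpow_nonneg hpos.le _), ← Real.rpow_add hpos, add_comm]
    · rw [indicator_of_notMem ht, indicator_of_notMem ht, zero_mul]
  have hsupp : ∀ t, (shell k).indicator (fun t => ENNReal.ofReal (t ^ (α + exponent k))) t ≠ 0 →
      t ∈ Ioc 0 1 :=
    fun t ht => shell_subset_Ioc k (support_indicator_subset ht)
  simp_rw [hmul]
  rw [setLIntegral_eq_of_support_subset (s := {x : ℝ | |x| ≤ 1}) fun x hx => (hsupp _ hx).2,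
    lintegral_comp_abs (measurable_indicator_shell k _),
    setLIntegral_eq_of_support_subset (s := Ioi 0) fun t ht => (hsupp t ht).1,
    lintegral_indicator (measurableSet_shell k), shellIntegral]

theorem setLIntegral_abs_rpow_levyEta (α : ℝ) :
    ∫⁻ x in {x : ℝ | |x| ≤ 1}, ENNReal.ofReal (|x| ^ α) ∂levyEta
      = 2 * ∑' k, shellIntegral k α := by
  have hmeas : ∀ k, Measurable fun x : ℝ =>
      (shell k).indicator (fun t => ENNReal.ofReal (t ^ exponent k)) |x| :=
    fun k => (measurable_indicator_shell k _).comp measurable_abs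
  have hpow : Measurable fun x : ℝ => ENNReal.ofReal (|x| ^ α) :=
    (measurable_abs.pow_const α).ennreal_ofReal
  have hball : MeasurableSet {x : ℝ | |x| ≤ 1} := measurableSet_le measurable_abs measurable_const
  rw [levyEta, funext ofReal_levyDensity,
    setLIntegral_withDensity_eq_setLIntegral_mul _ (Measurable.tsum hmeas) hpow hball]
  simp only [Pi.mul_apply, ← ENNReal.tsum_mul_right]
  rw [lintegral_tsum fun k => by fun_prop, ← ENNReal.tsum_mul_left]
  exact tsum_congr fun k => setLIntegral_indicator_shell_abs_mul k α

theorem shellIntegral_le {α : ℝ} (hα : 2 < α) (k : ℕ) :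
    shellIntegral k α ≤ ENNReal.ofReal ((8⁻¹ ^ (α - 2)) ^ k / (α - 2)) := by
  have hexp : α - 2 ≤ α + exponent k + 1 := by
    have : (0 : ℝ) < 1 / ((k : ℝ) + 1) := by positivity
    simp only [exponent]
    linarith
  have hpow : endpoint k ^ (α + exponent k + 1) ≤ (8⁻¹ ^ (α - 2)) ^ k :=
    calc endpoint k ^ (α + exponent k + 1) ≤ endpoint k ^ (α - 2) :=
          Real.rpow_le_rpow_of_exponent_ge (endpoint_pos k) (endpoint_le_one k) hexp
      _ ≤ (8⁻¹ ^ k) ^ (α - 2) :=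
          Real.rpow_le_rpow (endpoint_pos k).le (endpoint_le_inv_eight_pow k) (by linarith)
      _ = (8⁻¹ ^ (α - 2)) ^ k := (Real.rpow_pow_comm (by norm_num) _ _).symm
  calc shellIntegral k α ≤ ∫⁻ t in Ioc 0 (endpoint k), ENNReal.ofReal (t ^ (α + exponent k)) :=
        lintegral_mono_set (Ioc_subset_Ioc_left (endpoint_pos (k + 1)).le)
    _ = ENNReal.ofReal (endpoint k ^ (α + exponent k + 1) / (α + exponent k + 1)) :=
        setLIntegral_Ioc_zero_rpow (endpoint_pos k) (by linarith)
    _ ≤ ENNReal.ofReal ((8⁻¹ ^ (α - 2)) ^ k / (α - 2)) :=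
        ENNReal.ofReal_le_ofReal (div_le_div₀ (by positivity) hpow (by linarith) hexp)

theorem ofReal_endpoint_rpow_div_two_le_shellIntegral {α : ℝ} (hα : α ≤ 2) (k : ℕ) :
    ENNReal.ofReal (endpoint k ^ (α + exponent k + 1) / 2) ≤ shellIntegral k α := by
  have hexp : α + exponent k ≤ 0 := by
    have : 1 / ((k : ℝ) + 1) ≤ 1 := by
      rw [div_le_one (by positivity)]
      linarith [k.cast_nonneg (α := ℝ)]
    simp only [exponent]
    linarith
  have hgap : endpoint k / 2 ≤ endpoint k - endpoint (k + 1) := by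
    linarith [endpoint_succ_le k, endpoint_pos k]
  calc ENNReal.ofReal (endpoint k ^ (α + exponent k + 1) / 2)
      = ENNReal.ofReal (endpoint k ^ (α + exponent k) * (endpoint k / 2)) := by
        rw [Real.rpow_add_one (endpoint_pos k).ne', mul_div_assoc]
    _ ≤ ENNReal.ofReal (endpoint k ^ (α + exponent k) * (endpoint k - endpoint (k + 1))) :=
        ENNReal.ofReal_le_ofReal
          (mul_le_mul_of_nonneg_left hgap (Real.rpow_nonneg (endpoint_pos k).le _))
    _ ≤ shellIntegral k α :=
        ofReal_rpow_mul_sub_le_setLIntegral_Ioc (endpoint_pos (k + 1))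
          (endpoint_antitone k.le_succ) hexp

theorem one_le_endpoint_rpow {α : ℝ} {k : ℕ} (hk : 1 ≤ ((k : ℝ) + 1) * (2 - α)) :
    1 ≤ endpoint k ^ (α + exponent k + 1) := by
  have hexp : -(3 : ℝ) * ((k : ℝ) + 1) * (α + exponent k + 1)
      = 3 * (((k : ℝ) + 1) * (2 - α) - 1) := by
    simp only [exponent]
    field_simp
    ring
  rw [endpoint, ← Real.rpow_mul (by positivity), hexp]
  exact Real.one_le_rpow (by linarith [k.cast_nonneg (α := ℝ)]) (by linarith)

theorem tsum_shellIntegral_lt_top {α : ℝ} (hα : 2 < α) : ∑' k, shellIntegral k α < ∞ := by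
  set r : ℝ := 8⁻¹ ^ (α - 2)
  have hr : r < 1 := Real.rpow_lt_one (by norm_num) (by norm_num) (by linarith)
  calc ∑' k, shellIntegral k α ≤ ∑' k, ENNReal.ofReal (r ^ k / (α - 2)) :=
        ENNReal.tsum_le_tsum (shellIntegral_le hα)
    _ = ENNReal.ofReal (∑' k, r ^ k / (α - 2)) :=
        (ENNReal.ofReal_tsum_of_nonneg (fun k => div_nonneg (by positivity) (by linarith))
          ((summable_geometric_of_lt_one (by positivity) hr).div_const _)).symm
    _ < ∞ := ENNReal.ofReal_lt_top

theorem tsum_shellIntegral_eq_top {α : ℝ} (hα : α < 2) : ∑' k, shellIntegral k α = ∞ := by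
  obtain ⟨N, hN⟩ := exists_nat_ge (1 / (2 - α))
  rw [div_le_iff₀ (by linarith)] at hN
  refine ENNReal.tsum_eq_top_of_eventually_le (c := ENNReal.ofReal (1 / 2)) (by norm_num) ?_
  filter_upwards [eventually_ge_atTop N] with k hk
  have hkN : (N : ℝ) ≤ k := by exact_mod_cast hk
  have hone : 1 ≤ endpoint k ^ (α + exponent k + 1) :=
    one_le_endpoint_rpow (by nlinarith)
  calc ENNReal.ofReal (1 / 2) ≤ ENNReal.ofReal (endpoint k ^ (α + exponent k + 1) / 2) :=
        ENNReal.ofReal_le_ofReal (by linarith)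
    _ ≤ shellIntegral k α := ofReal_endpoint_rpow_div_two_le_shellIntegral hα.le k

end LevyEta

/-- the index `β = inf{α > 0 : ∫_{|x|≤1} |x|^α dη < ∞}` of the measure `η`
equals `2`. -/
theorem stmt_4 :
    sInf {α : ℝ | 0 < α ∧
      (∫⁻ x in {x : ℝ | |x| ≤ 1}, ENNReal.ofReal (|x| ^ α) ∂levyEta) < ⊤} = 2 := by
  refine csInf_eq_of_Ioi_subset_of_subset_Ici (fun α hα => ?_) (fun α hα => ?_)
  · rw [mem_Ioi] at hα
    refine ⟨by linarith, ?_⟩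
    rw [LevyEta.setLIntegral_abs_rpow_levyEta]
    exact ENNReal.mul_lt_top ENNReal.ofNat_lt_top (LevyEta.tsum_shellIntegral_lt_top hα)
  · by_contra hlt
    have hfin := hα.2
    rw [LevyEta.setLIntegral_abs_rpow_levyEta, LevyEta.tsum_shellIntegral_eq_top (not_le.1 hlt),
      ENNReal.mul_top two_ne_zero] at hfin
    exact lt_irrefl ∞ hfin
end

section
/- Let p ≥ 1 and T > 0. Let x, z : [0,T] → ℝ^d, suppose x has finite p-variation, and let c : {(s,t) : 0 ≤ s ≤ t ≤ T} → [0,∞) be superadditive, i.e. c(s,t) + c(t,u) ≤ c(s,u) for all s ≤ t ≤ u. Assume that for all 0 ≤ s ≤ t ≤ T, ‖z(t) − z(s)‖ ≤ c(s,t) + ‖x‖_{p,[s,t]}. Then z has finite p-variation and ‖z‖_{p,[0,T]}^p ≤ 2^{p−1} ( c(0,T)^p + ‖x‖_{p,[0,T]}^p ). -/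
/-!
On each interval `[s,t]` of a partition,
`‖z(t) − z(s)‖^p ≤ 2^{p−1} (c(s,t)^p + ‖x‖_{p,[s,t]}^p)` by convexity of `r ↦ r^p`.
The right-hand side is superadditive in `(s,t)`: `c^p` is, because `a^p + b^p ≤ (a+b)^p`
for `p ≥ 1`, and `‖x‖_{p,[s,t]}^p` is, because partitions of `[s,t]` and `[t,u]` concatenate
to a partition of `[s,u]`. Summing a superadditive function over a partition of `[0,T]`
gives at most its value at `(0,T)`.
-/

/-- The set of partition sums `Σ_k ‖f(t_k) − f(t_{k−1})‖^p` over all finite partitions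
`a = t_0 ≤ t_1 ≤ … ≤ t_m = b` of `[a,b]`; its supremum is `‖f‖_{p,[a,b]}^p`. -/
def pVarSums {E : Type*} [NormedAddCommGroup E] (p a b : ℝ) (f : ℝ → E) : Set ℝ :=
  {S | ∃ (m : ℕ) (t : Fin (m + 1) → ℝ), Monotone t ∧ t 0 = a ∧ t (Fin.last m) = b ∧
    S = ∑ i : Fin m, ‖f (t i.succ) - f (t i.castSucc)‖ ^ p}

open Finset Pointwise

def SuperadditiveOn (g : ℝ → ℝ → ℝ) (a b : ℝ) : Prop :=
  ∀ s t u, a ≤ s → s ≤ t → t ≤ u → u ≤ b → g s t + g t u ≤ g s u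

namespace SuperadditiveOn

variable {g h : ℝ → ℝ → ℝ} {a b : ℝ}

lemma add (hg : SuperadditiveOn g a b) (hh : SuperadditiveOn h a b) :
    SuperadditiveOn (fun s t => g s t + h s t) a b := fun s t u hs hst htu hu => by
  linarith [hg s t u hs hst htu hu, hh s t u hs hst htu hu]

lemma const_mul (hg : SuperadditiveOn g a b) {k : ℝ} (hk : 0 ≤ k) :
    SuperadditiveOn (fun s t => k * g s t) a b := fun s t u hs hst htu hu => by
  rw [← mul_add]
  exact mul_le_mul_of_nonneg_left (hg s t u hs hst htu hu) hk

lemma rpow (hg : SuperadditiveOn g a b)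
    (hg0 : ∀ s t, a ≤ s → s ≤ t → t ≤ b → 0 ≤ g s t) {p : ℝ} (hp : 1 ≤ p) :
    SuperadditiveOn (fun s t => g s t ^ p) a b :=
  fun s t u hs hst htu hu =>
    have hst0 := hg0 s t hs hst (htu.trans hu)
    have htu0 := hg0 t u (hs.trans hst) htu hu
    (Real.add_rpow_le_rpow_add hst0 htu0 hp).trans
      (Real.rpow_le_rpow (add_nonneg hst0 htu0) (hg s t u hs hst htu hu) (by linarith))

lemma sum_le (hg : SuperadditiveOn g a b) (hg0 : ∀ r, a ≤ r → r ≤ b → 0 ≤ g r r) :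
    ∀ {m : ℕ} {t : Fin (m + 1) → ℝ}, Monotone t → a ≤ t 0 → t (Fin.last m) ≤ b →
      ∑ i : Fin m, g (t i.castSucc) (t i.succ) ≤ g (t 0) (t (Fin.last m))
  | 0, t, _, ha, hb => by simpa using hg0 (t 0) ha hb
  | m + 1, t, ht, ha, hb => by
    have hinit := sum_le hg hg0 (t := t ∘ Fin.castSucc) (ht.comp Fin.strictMono_castSucc.monotone)
      ha ((ht (Fin.le_last _)).trans hb)
    simp only [Function.comp_apply, ← Fin.succ_castSucc] at hinit
    rw [Fin.sum_univ_castSucc]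
    calc _ ≤ g (t 0) (t (Fin.last m).castSucc) +
          g (t (Fin.last m).castSucc) (t (Fin.last (m + 1))) :=
          add_le_add_left hinit _
      _ ≤ g (t 0) (t (Fin.last (m + 1))) :=
          hg _ _ _ ha (ht (Fin.zero_le _)) (ht (Fin.castSucc_le_succ _)) hb

end SuperadditiveOn

section PVariation

variable {E : Type*} [NormedAddCommGroup E] {p : ℝ} {f : ℝ → E}

lemma norm_sub_rpow_mem_pVarSums {a b : ℝ} (hab : a ≤ b) :
    ‖f b - f a‖ ^ p ∈ pVarSums p a b f :=
  ⟨1, ![a, b], by simp [monotone_vecCons, hab, Subsingleton.monotone], rfl, rfl, by simp⟩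

lemma pVarSums_nonempty {a b : ℝ} (hab : a ≤ b) : (pVarSums p a b f).Nonempty :=
  ⟨_, norm_sub_rpow_mem_pVarSums hab⟩

lemma sSup_pVarSums_nonneg {a b : ℝ} (hab : a ≤ b) (hf : BddAbove (pVarSums p a b f)) :
    0 ≤ sSup (pVarSums p a b f) :=
  (Real.rpow_nonneg (norm_nonneg _) p).trans (le_csSup hf (norm_sub_rpow_mem_pVarSums hab))

lemma add_norm_sub_rpow_mem_pVarSums {a b c S : ℝ} (hS : S ∈ pVarSums p a b f) (hbc : b ≤ c) :
    S + ‖f c - f b‖ ^ p ∈ pVarSums p a c f := by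
  obtain ⟨m, t, ht, ht0, htm, rfl⟩ := hS
  refine ⟨m + 1, Fin.snoc t c, ?_, ?_, Fin.snoc_last _ _, ?_⟩
  · refine Fin.monotone_iff_le_succ.mpr fun i => Fin.lastCases ?_ (fun j => ?_) i
    · simpa [htm] using hbc
    · rw [Fin.succ_castSucc, Fin.snoc_castSucc, Fin.snoc_castSucc]
      exact ht (Fin.castSucc_le_succ j)
  · rw [← Fin.castSucc_zero, Fin.snoc_castSucc, ht0]
  · simp only [Fin.sum_univ_castSucc, Fin.succ_castSucc, Fin.snoc_castSucc, Fin.snoc_last,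
      Fin.succ_last, htm]

lemma pVarSums_add_subset {a b c : ℝ} :
    pVarSums p a b f + pVarSums p b c f ⊆ pVarSums p a c f := by
  rintro _ ⟨S, hS, _, ⟨n, t, ht, ht0, rfl, rfl⟩, rfl⟩
  beta_reduce
  induction n with
  | zero => simpa [← ht0] using hS
  | succ n ih =>
    have hinit := ih (t ∘ Fin.castSucc) (ht.comp Fin.strictMono_castSucc.monotone) ht0
    simp only [Function.comp_apply, ← Fin.succ_castSucc] at hinit
    rw [Fin.sum_univ_castSucc, ← add_assoc]
    exact add_norm_sub_rpow_mem_pVarSums hinit (ht (Fin.castSucc_le_succ _))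

lemma superadditiveOn_sSup_pVarSums {a b : ℝ}
    (hf : ∀ s t, a ≤ s → s ≤ t → t ≤ b → BddAbove (pVarSums p s t f)) :
    SuperadditiveOn (fun s t => sSup (pVarSums p s t f)) a b := fun s t u hs hst htu hu => by
  rw [← csSup_add (pVarSums_nonempty hst) (hf s t hs hst (htu.trans hu))
    (pVarSums_nonempty htu) (hf t u (hs.trans hst) htu hu)]
  exact csSup_le_csSup (hf s u hs (hst.trans htu) hu)
    ((pVarSums_nonempty hst).add (pVarSums_nonempty htu)) pVarSums_add_subset

lemma le_of_mem_pVarSums_of_superadditiveOn {g : ℝ → ℝ → ℝ} {a b S : ℝ}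
    (hg : SuperadditiveOn g a b)
    (hg0 : ∀ r, a ≤ r → r ≤ b → 0 ≤ g r r)
    (hfg : ∀ s t, a ≤ s → s ≤ t → t ≤ b → ‖f t - f s‖ ^ p ≤ g s t)
    (hS : S ∈ pVarSums p a b f) : S ≤ g a b := by
  obtain ⟨m, t, ht, rfl, rfl, rfl⟩ := hS
  calc _ ≤ ∑ i : Fin m, g (t i.castSucc) (t i.succ) := sum_le_sum fun i _ =>
        hfg _ _ (ht (Fin.zero_le _)) (ht (Fin.castSucc_le_succ i)) (ht (Fin.le_last _))
    _ ≤ _ := hg.sum_le hg0 ht le_rfl le_rfl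

end PVariation

lemma rpow_le_two_rpow_mul_add {p u c V : ℝ} (hp : 1 ≤ p) (hu : 0 ≤ u) (hc : 0 ≤ c)
    (hV : 0 ≤ V)
    (h : u ≤ c + V ^ (1 / p)) : u ^ p ≤ 2 ^ (p - 1) * (c ^ p + V) := by
  lift c to NNReal using hc
  lift V to NNReal using hV
  calc u ^ p ≤ (c + V ^ (1 / p)) ^ p := Real.rpow_le_rpow hu h (by linarith)
    _ ≤ 2 ^ (p - 1) * (c ^ p + (V ^ (1 / p)) ^ p) := by
      exact_mod_cast NNReal.rpow_add_le_mul_rpow_add_rpow c (V ^ (1 / p)) hp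
    _ = _ := by rw [one_div, Real.rpow_inv_rpow V.coe_nonneg (by linarith)]

/-- if `x` has finite `p`-variation on `[0,T]`, `c` is a nonnegative
superadditive function of pairs `s ≤ t`, and
`‖z(t) − z(s)‖ ≤ c(s,t) + ‖x‖_{p,[s,t]}` for all `0 ≤ s ≤ t ≤ T`, then `z` has finite
`p`-variation and `‖z‖_{p,[0,T]}^p ≤ 2^{p−1} (c(0,T)^p + ‖x‖_{p,[0,T]}^p)`. -/
theorem stmt_13 {d : ℕ} (p T : ℝ) (hp : 1 ≤ p) (hT : 0 < T)
    (x z : ℝ → EuclideanSpace ℝ (Fin d))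
    (hx : ∀ s t : ℝ, 0 ≤ s → s ≤ t → t ≤ T → BddAbove (pVarSums p s t x))
    (c : ℝ → ℝ → ℝ) (hc0 : ∀ s t : ℝ, 0 ≤ s → s ≤ t → t ≤ T → 0 ≤ c s t)
    (hcsuper : ∀ s t u : ℝ, 0 ≤ s → s ≤ t → t ≤ u → u ≤ T → c s t + c t u ≤ c s u)
    (hz : ∀ s t : ℝ, 0 ≤ s → s ≤ t → t ≤ T →
      ‖z t - z s‖ ≤ c s t + sSup (pVarSums p s t x) ^ (1 / p)) :
    BddAbove (pVarSums p 0 T z) ∧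
      sSup (pVarSums p 0 T z) ≤
        2 ^ (p - 1) * ((c 0 T) ^ p + sSup (pVarSums p 0 T x)) := by
  have hx0 : ∀ s t, 0 ≤ s → s ≤ t → t ≤ T → 0 ≤ sSup (pVarSums p s t x) :=
    fun s t hs hst ht => sSup_pVarSums_nonneg hst (hx s t hs hst ht)
  let g s t := 2 ^ (p - 1) * (c s t ^ p + sSup (pVarSums p s t x))
  have hg : SuperadditiveOn g 0 T :=
    (((show SuperadditiveOn c 0 T from hcsuper).rpow hc0 hp).add
      (superadditiveOn_sSup_pVarSums hx)).const_mul (by positivity)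
  have hbound : ∀ S ∈ pVarSums p 0 T z, S ≤ g 0 T :=
    fun S hS => le_of_mem_pVarSums_of_superadditiveOn hg
      (fun r hr hrT => mul_nonneg (by positivity)
        (add_nonneg (Real.rpow_nonneg (hc0 r r hr le_rfl hrT) p) (hx0 r r hr le_rfl hrT)))
      (fun s t hs hst ht => rpow_le_two_rpow_mul_add hp (norm_nonneg _) (hc0 s t hs hst ht)
        (hx0 s t hs hst ht) (hz s t hs hst ht)) hS
  exact ⟨⟨_, hbound⟩, csSup_le (pVarSums_nonempty hT.le) hbound⟩
end
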